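/- Let q ≥ 2, M > m ≥ 0, ℓ ≤ u and n₀ ≥ max{−ℓ/q^m, 0} be integers. Let x : ℕ → ℂ be a sequence such that for every 0 ≤ s < q^M there exist a q-regular sequence g_s : ℕ → ℂ and constants c_{s,k} ∈ ℂ for ℓ ≤ k ≤ u with x(q^M n + s) = Σ_{ℓ≤k≤u} c_{s,k} x(q^m n + k) + g_s(n) for all n ≥ n₀. Then x is q-regular. -/

import Mathlib

open scoped BigOperators Matrix

/-- A sequence `y : ℕ → ℂ` is `q`-regular if there are `D ∈ ℕ`, a vector-valued
sequence `v : ℕ → ℂ^D` whose first component coincides with `y`, and matrices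
`A₀, …, A_{q−1}` with `v(qn + r) = A_r v(n)` for all `0 ≤ r < q` and `n ≥ 0`. -/
def IsQRegular (q : ℕ) (y : ℕ → ℂ) : Prop :=
  ∃ (D : ℕ) (v : ℕ → Fin (D + 1) → ℂ)
    (A : Fin q → Matrix (Fin (D + 1)) (Fin (D + 1)) ℂ),
    (∀ n : ℕ, v n 0 = y n) ∧
    ∀ r : Fin q, ∀ n : ℕ, v (q * n + (r : ℕ)) = A r *ᵥ v n

def shiftT (q r : ℕ) : (ℕ → ℂ) →ₗ[ℂ] (ℕ → ℂ) where
  toFun y := fun n => y (q * n + r)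
  map_add' _ _ := rfl
  map_smul' _ _ := rfl

def wseq {D : ℕ} (v : ℕ → Fin (D + 1) → ℂ) (i : Fin (D + 1)) (a : ℤ) : ℕ → ℂ :=
  fun n => if 0 ≤ (n : ℤ) + a then v ((n : ℤ) + a).toNat i else 0

lemma wseq_shift {q D : ℕ} (v : ℕ → Fin (D + 1) → ℂ)
    (A : Fin q → Matrix (Fin (D + 1)) (Fin (D + 1)) ℂ)
    (hA : ∀ r : Fin q, ∀ n : ℕ, v (q * n + (r : ℕ)) = A r *ᵥ v n)
    (i : Fin (D + 1)) (a a' : ℤ) (r : ℕ) (rfin : Fin q)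
    (h1 : (q : ℤ) * a' + (rfin : ℕ) = a + r) :
    (fun n => wseq v i a (q * n + r)) = ∑ j, A rfin i j • wseq v j a' := by
  have hq0 : 0 < q := rfin.pos
  funext n
  rw [Finset.sum_apply]
  simp only [Pi.smul_apply, smul_eq_mul, wseq]
  rcases le_or_gt 0 ((n : ℤ) + a') with ht | ht
  · set t : ℕ := ((n : ℤ) + a').toNat with htdef
    have htZ : (t : ℤ) = (n : ℤ) + a' := Int.toNat_of_nonneg ht
    have harg : ((q * n + r : ℕ) : ℤ) + a = ((q * t + (rfin : ℕ) : ℕ) : ℤ) := by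
      push_cast [htZ]
      linear_combination -h1
    have hcond : 0 ≤ ((q * n + r : ℕ) : ℤ) + a := by rw [harg]; positivity
    rw [if_pos hcond, harg, Int.toNat_natCast]
    have hv : v (q * t + (rfin : ℕ)) i = ∑ j, A rfin i j * v t j := by
      rw [hA rfin t]; rfl
    rw [hv]
    refine Finset.sum_congr rfl fun j _ => ?_
    rw [if_pos ht]
  · have hcond : ((q * n + r : ℕ) : ℤ) + a < 0 := by
      have h2 : (n : ℤ) + a' ≤ -1 := by omega
      have h3 : ((q * n + r : ℕ) : ℤ) + a = (q : ℤ) * ((n : ℤ) + a') + (rfin : ℕ) := by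
        push_cast; linear_combination -h1
      rw [h3]
      have hr : ((rfin : ℕ) : ℤ) ≤ (q : ℤ) - 1 := by
        have := rfin.2
        omega
      nlinarith [h2, hr, (by exact_mod_cast hq0 : (0:ℤ) < (q:ℤ))]
    rw [if_neg (not_le.mpr hcond)]
    simp [if_neg (not_le.mpr ht)]

theorem isQRegular_of_submodule (q : ℕ) (x : ℕ → ℂ) (V : Submodule ℂ (ℕ → ℂ))
    (hfd : FiniteDimensional ℂ V) (hx : x ∈ V)
    (hcl : ∀ r : Fin q, ∀ y : ℕ → ℂ, y ∈ V → (fun n => y (q * n + (r : ℕ))) ∈ V) :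
    IsQRegular q x := by
  classical
  set D := Module.finrank ℂ V with hD
  let b : Module.Basis (Fin D) ℂ V := Module.finBasis ℂ V
  have hshV : ∀ (r : Fin q) (y : V), (fun n => (y : ℕ → ℂ) (q * n + (r : ℕ))) ∈ V :=
    fun r y => hcl r y y.2
  let rep : Fin q → V → (Fin D → ℂ) := fun r y => b.repr ⟨_, hshV r y⟩
  have key : ∀ (r : Fin q) (y : V) (n : ℕ),
      (y : ℕ → ℂ) (q * n + (r : ℕ)) = ∑ i, rep r y i * (b i : ℕ → ℂ) n := by
    intro r y n
    have h1 : (⟨_, hshV r y⟩ : V) = ∑ i, rep r y i • b i := (b.sum_repr _).symm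
    have h2 : (fun n => (y : ℕ → ℂ) (q * n + (r : ℕ)))
        = ((∑ i, rep r y i • b i : V) : ℕ → ℂ) := congrArg Subtype.val h1
    have h3 := congrFun h2 n
    simp only [AddSubmonoidClass.coe_finset_sum, Finset.sum_apply, Pi.smul_apply,
      SetLike.val_smul, smul_eq_mul] at h3
    exact h3
  let xV : V := ⟨x, hx⟩
  refine ⟨D, fun n => Fin.cons (x n) (fun i => (b i : ℕ → ℂ) n),
    fun r => Matrix.of (fun i j =>
      Fin.cases (Fin.cases 0 (fun j' => rep r xV j') j)
        (fun i' => Fin.cases 0 (fun j' => rep r (b i') j') j) i), ?_, ?_⟩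
  · intro n; simp
  · intro r n
    funext i
    rw [Matrix.mulVec]
    induction i using Fin.cases with
    | zero =>
        simp only [Fin.cons_zero, dotProduct, Matrix.of_apply, Fin.cases_zero]
        rw [Fin.sum_univ_succ]
        simp only [Fin.cases_zero, Fin.cases_succ, Fin.cons_zero, Fin.cons_succ, zero_mul, zero_add]
        exact key r xV n
    | succ i' =>
        simp only [Fin.cons_succ, dotProduct, Matrix.of_apply, Fin.cases_succ]
        rw [Fin.sum_univ_succ]
        simp only [Fin.cases_zero, Fin.cases_succ, Fin.cons_zero, Fin.cons_succ, zero_mul, zero_add]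
        exact key r (b i') n

set_option maxHeartbeats 4000000 in
/-- **Corollary (inhomogeneous `q`-recursive sequences).**

Let `q ≥ 2`, `M > m ≥ 0`, `ℓ ≤ u` and `n₀ ≥ max{−ℓ/q^m, 0}` be integers and let
`x : ℕ → ℂ` be such that for every `0 ≤ s < q^M` there are a `q`-regular sequence
`g_s` and constants `c_{s,k} ∈ ℂ` with
`x(q^M n + s) = Σ_{ℓ≤k≤u} c_{s,k} x(q^m n + k) + g_s(n)` for all `n ≥ n₀`.
Then `x` is `q`-regular. -/
theorem inhomogeneous_q_recursive_is_q_regular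
    (q M m : ℕ) (ℓ u : ℤ) (n₀ : ℕ)
    (hq : 2 ≤ q) (hMm : m < M) (hℓu : ℓ ≤ u)
    (hn₀ : (-(ℓ : ℚ)) / (q : ℚ) ^ m ≤ (n₀ : ℚ))
    (x : ℕ → ℂ)
    (xZ : ℤ → ℂ) (hxZ : ∀ k : ℤ, xZ k = if 0 ≤ k then x k.toNat else 0)
    (hrec : ∀ s : ℕ, s < q ^ M →
      ∃ (g : ℕ → ℂ), IsQRegular q g ∧
        ∃ c : ℤ → ℂ, ∀ n : ℕ, n₀ ≤ n →
          x (q ^ M * n + s)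
            = (∑ k ∈ Finset.Icc ℓ u, c k * xZ ((q : ℤ) ^ m * n + k)) + g n) :
    IsQRegular q x := by
  classical
  choose! g hgreg c hc using hrec
  simp only [IsQRegular] at hgreg
  choose! Dg vg Ag hg0 hgA using hgreg
  -- integer constants
  have hq1 : (1:ℤ) < (q:ℤ) := by exact_mod_cast hq
  have hP1 : (1:ℤ) ≤ (q:ℤ)^M := one_le_pow₀ (by linarith)
  have hp1 : (1:ℤ) ≤ (q:ℤ)^m := one_le_pow₀ (by linarith)
  have hqpP : (q:ℤ) * (q:ℤ)^m ≤ (q:ℤ)^M := by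
    calc (q:ℤ) * (q:ℤ)^m = (q:ℤ)^(m+1) := (pow_succ' _ _).symm
    _ ≤ (q:ℤ)^M := pow_le_pow_right₀ (by linarith) (by omega)
  set P : ℤ := (q:ℤ)^M with hP
  set p : ℤ := (q:ℤ)^m with hp
  set L : ℤ := -(P + q * |ℓ|) with hL
  set C : ℤ := P + q * |u| with hC
  have hL0 : L ≤ 0 := by
    have := abs_nonneg ℓ
    rw [hL]; nlinarith
  have hC0 : 0 ≤ C := by
    have := abs_nonneg u
    rw [hC]; nlinarith
  have hLl : L ≤ ℓ := by
    have h1 := neg_abs_le ℓ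
    have h2 := abs_nonneg ℓ
    rw [hL]; nlinarith
  have hCu : u ≤ C := by
    have h1 := le_abs_self u
    have h2 := abs_nonneg u
    rw [hC]; nlinarith
  set Alo : ℤ := L - P with hAlo
  set Ahi : ℤ := C + P with hAhi
  set N : ℕ := n₀ + (P - L).toNat + 1 with hN
  set f : ℕ → ℤ → (ℕ → ℂ) := fun j k => fun n => xZ ((q:ℤ)^j * n + k) with hf
  set δ : ℕ → (ℕ → ℂ) := fun t => fun n => if n = t then 1 else 0 with hδ
  set S : Set (ℕ → ℂ) :=
    (⋃ j ∈ Set.Iio M, ⋃ k ∈ Set.Icc L (C + (q:ℤ)^j), {f j k}) ∪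
    ((⋃ t ∈ Set.Iio N, {δ t}) ∪
     (⋃ s ∈ Set.Iio (q^M), ⋃ a ∈ Set.Icc Alo Ahi,
        Set.range (fun i : Fin (Dg s + 1) => wseq (vg s) i a))) with hS
  set V : Submodule ℂ (ℕ → ℂ) := Submodule.span ℂ S with hV
  -- membership helpers
  have hfS : ∀ j k, j < M → L ≤ k → k ≤ C + (q:ℤ)^j → f j k ∈ V := by
    intro j k hj hk1 hk2
    exact Submodule.subset_span (Or.inl (Set.mem_biUnion (Set.mem_Iio.mpr hj)
      (Set.mem_biUnion (Set.mem_Icc.mpr ⟨hk1, hk2⟩) rfl)))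
  have hδS : ∀ t, t < N → δ t ∈ V := by
    intro t ht
    exact Submodule.subset_span (Or.inr (Or.inl (Set.mem_biUnion (Set.mem_Iio.mpr ht) rfl)))
  have hwS : ∀ s, s < q^M → ∀ a, Alo ≤ a → a ≤ Ahi → ∀ i, wseq (vg s) i a ∈ V := by
    intro s hs a ha1 ha2 i
    exact Submodule.subset_span (Or.inr (Or.inr (Set.mem_biUnion (Set.mem_Iio.mpr hs)
      (Set.mem_biUnion (Set.mem_Icc.mpr ⟨ha1, ha2⟩) ⟨i, rfl⟩))))
  -- finite dimensionality
  have hSfin : S.Finite := by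
    rw [hS]
    refine Set.Finite.union ?_ (Set.Finite.union ?_ ?_)
    · exact (Set.finite_Iio M).biUnion fun j _ =>
        (Set.finite_Icc _ _).biUnion fun k _ => Set.finite_singleton _
    · exact (Set.finite_Iio N).biUnion fun t _ => Set.finite_singleton _
    · exact (Set.finite_Iio (q^M)).biUnion fun s _ =>
        (Set.finite_Icc _ _).biUnion fun a _ => Set.finite_range _
  have hfd : FiniteDimensional ℂ V := FiniteDimensional.span_of_finite ℂ hSfin
  -- eventually-zero sequences are in V
  have hZ : ∀ y : ℕ → ℂ, (∀ n, N ≤ n → y n = 0) → y ∈ V := by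
    intro y hy
    have hyeq : y = ∑ t ∈ Finset.range N, y t • δ t := by
      funext n
      rw [Finset.sum_apply]
      simp only [Pi.smul_apply, smul_eq_mul, hδ, mul_ite, mul_one, mul_zero]
      rw [Finset.sum_ite_eq (Finset.range N) n y]
      by_cases hn : n < N
      · rw [if_pos (Finset.mem_range.mpr hn)]
      · rw [if_neg (fun hc => hn (Finset.mem_range.mp hc))]
        exact hy n (le_of_not_gt hn)
    rw [hyeq]
    exact Submodule.sum_mem _ fun t ht =>
      Submodule.smul_mem _ _ (hδS t (Finset.mem_range.mp ht))
  -- x ∈ V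
  have hxV : x ∈ V := by
    have hxf : x = f 0 0 := by
      funext n
      rw [hf]
      simp [hxZ]
    rw [hxf]
    exact hfS 0 0 (by omega) hL0 (by rw [pow_zero]; linarith)
  -- key reduction: level-M window sequences are in V
  have hred : ∀ k'' : ℤ, L ≤ k'' → k'' ≤ C + P → f M k'' ∈ V := by
    intro k'' hk1 hk2
    set a : ℤ := k'' / P with ha
    have hdm : P * a + k'' % P = k'' := Int.mul_ediv_add_emod k'' P
    have hm0 : 0 ≤ k'' % P := Int.emod_nonneg k'' (by linarith)
    have hmP : k'' % P < P := Int.emod_lt_of_pos k'' (by linarith)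
    set s : ℕ := (k'' % P).toNat with hsdef
    have hsZ : (s:ℤ) = k'' % P := Int.toNat_of_nonneg hm0
    have hs : s < q ^ M := by
      have h1 : (s:ℤ) < P := by rw [hsZ]; exact hmP
      rw [hP] at h1
      exact_mod_cast h1
    have hk''eq : k'' = P * a + (s:ℤ) := by rw [hsZ]; linarith
    have hPa_le : P * a ≤ k'' := by linarith
    have hPa_ge : k'' - P < P * a := by linarith
    -- bounds on a
    have haAlo : Alo ≤ a := by
      rcases le_or_gt 0 a with h | h
      · rw [hAlo]; linarith
      · have h3 : P * a ≤ a := by nlinarith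
        rw [hAlo]; linarith
    have haAhi : a ≤ Ahi := by
      rcases le_or_gt a 0 with h | h
      · rw [hAhi]; linarith
      · have h3 : a ≤ P * a := by nlinarith
        rw [hAhi]; linarith
    -- window bounds at level m
    have hq0 : (0:ℤ) < (q:ℤ) := by linarith
    have hwinlo : ∀ k', ℓ ≤ k' → L ≤ p * a + k' := by
      intro k' hk'
      rcases le_or_gt 0 a with h | h
      · nlinarith
      · have h1 : P * a ≤ (q:ℤ) * (p * a) := by nlinarith
        have habs1 : -ℓ ≤ |ℓ| := neg_le_abs ℓ
        have habs2 : 0 ≤ |ℓ| := abs_nonneg ℓ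
        have h2 : (q:ℤ) * L ≤ (q:ℤ) * (p * a + k') := by
          rw [hL] at *
          nlinarith
        nlinarith
    have hwinhi : ∀ k', k' ≤ u → p * a + k' ≤ C + p := by
      intro k' hk'
      rcases le_or_gt a 0 with h | h
      · nlinarith
      · have h1 : (q:ℤ) * (p * a) ≤ P * a := by nlinarith
        have habs1 : u ≤ |u| := le_abs_self u
        have habs2 : 0 ≤ |u| := abs_nonneg u
        have h2 : (q:ℤ) * (p * a + k') ≤ (q:ℤ) * (C + p) := by
          rw [hC] at *
          nlinarith
        nlinarith
    -- the remainder term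
    set R : ℕ → ℂ := (∑ k' ∈ Finset.Icc ℓ u, c s k' • f m (p * a + k')) + wseq (vg s) 0 a
      with hR
    have hRV : R ∈ V := by
      rw [hR]
      refine Submodule.add_mem _ (Submodule.sum_mem _ fun k' hk' => ?_) ?_
      · rw [Finset.mem_Icc] at hk'
        exact Submodule.smul_mem _ _
          (hfS m (p * a + k') hMm (hwinlo k' hk'.1) (by rw [← hp]; exact hwinhi k' hk'.2))
      · exact hwS s hs a haAlo haAhi 0
    have hE : ∀ n, N ≤ n → f M k'' n = R n := by
      intro n hn
      have hPL : ((P - L).toNat : ℤ) = P - L := Int.toNat_of_nonneg (by linarith)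
      have hnN : ((n:ℤ)) ≥ (n₀ : ℤ) + (P - L) + 1 := by
        have : (N:ℤ) ≤ (n:ℤ) := by exact_mod_cast hn
        rw [hN] at this
        push_cast at this
        omega
      have hna : (n₀ : ℤ) + 1 ≤ (n:ℤ) + a := by
        rw [hAlo] at haAlo
        linarith
      set t : ℕ := ((n:ℤ) + a).toNat with ht
      have hn₀0 : (0:ℤ) ≤ (n₀:ℤ) := Int.natCast_nonneg n₀
      have htZ : (t:ℤ) = (n:ℤ) + a := Int.toNat_of_nonneg (by linarith)
      have htn₀ : n₀ ≤ t := by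
        have h1 : (n₀:ℤ) ≤ (t:ℤ) := by linarith
        exact_mod_cast h1
      have harg : (q:ℤ)^M * (n:ℤ) + k'' = ((q^M * t + s : ℕ) : ℤ) := by
        push_cast
        rw [htZ]
        linear_combination hk''eq + a * hP
      simp only [hf, hR, Pi.add_apply, Finset.sum_apply, Pi.smul_apply, smul_eq_mul]
      rw [harg, hxZ]
      rw [if_pos (Int.natCast_nonneg _), Int.toNat_natCast]
      rw [hc s hs t htn₀]
      congr 1
      · refine Finset.sum_congr rfl fun k' hk' => ?_
        congr 2
        rw [htZ]
        linear_combination a * hp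
      · simp only [wseq]
        rw [if_pos (by linarith : (0:ℤ) ≤ (n:ℤ) + a), ← ht]
        exact (hg0 s hs t).symm
    have hfin : f M k'' = (f M k'' - R) + R := by ring
    rw [hfin]
    exact Submodule.add_mem _
      (hZ _ fun n hn => by rw [Pi.sub_apply, hE n hn, sub_self]) hRV
  -- closure of V under the shift maps
  have hcl : ∀ r : Fin q, ∀ y : ℕ → ℂ, y ∈ V → (fun n => y (q * n + (r:ℕ))) ∈ V := by
    intro r
    have hrq : ((r:ℕ):ℤ) ≤ (q:ℤ) - 1 := by
      have := r.2
      omega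
    have hr0 : (0:ℤ) ≤ ((r:ℕ):ℤ) := Int.natCast_nonneg _
    suffices hsu : V ≤ V.comap (shiftT q (r:ℕ)) by
      intro y hy
      exact hsu hy
    conv_lhs => rw [hV]
    rw [Submodule.span_le]
    intro y hy
    simp only [SetLike.mem_coe, Submodule.mem_comap]
    rw [hS, Set.mem_union, Set.mem_union] at hy
    rcases hy with h1 | h2 | h3
    · -- f-generators
      simp only [Set.mem_iUnion, Set.mem_singleton_iff, Set.mem_Iio, Set.mem_Icc,
        exists_prop] at h1
      obtain ⟨j, hj, k, ⟨hk1, hk2⟩, rfl⟩ := h1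
      have hsh : shiftT q (r:ℕ) (f j k) = f (j+1) ((q:ℤ)^j * (r:ℕ) + k) := by
        funext n
        simp only [shiftT, LinearMap.coe_mk, AddHom.coe_mk, hf]
        congr 1
        push_cast
        ring
      rw [hsh]
      have hjpow : (0:ℤ) ≤ (q:ℤ)^j := by positivity
      have hlo : L ≤ (q:ℤ)^j * (r:ℕ) + k := by nlinarith
      have hpow1 : (q:ℤ)^j * (q:ℤ) = (q:ℤ)^(j+1) := (pow_succ _ _).symm
      have hhi : (q:ℤ)^j * (r:ℕ) + k ≤ C + (q:ℤ)^(j+1) := by nlinarith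
      rcases Nat.lt_or_ge (j+1) M with hj1 | hj1
      · exact hfS (j+1) _ hj1 hlo hhi
      · have hjM : j + 1 = M := by omega
        have hPM : (q:ℤ)^(j+1) = P := by rw [hP, hjM]
        rw [hjM] at hsh ⊢
        refine hred _ hlo ?_
        rw [← hPM]
        exact hhi
    · -- δ-generators
      simp only [Set.mem_iUnion, Set.mem_singleton_iff, Set.mem_Iio, exists_prop] at h2
      obtain ⟨t, ht, rfl⟩ := h2
      refine hZ _ fun n hn => ?_
      have h4 : shiftT q (r:ℕ) (δ t) n = δ t (q * n + (r:ℕ)) := rfl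
      rw [h4]
      simp only [hδ]
      rw [if_neg]
      have h5 : n ≤ q * n := Nat.le_mul_of_pos_left n (by omega)
      omega
    · -- w-generators
      simp only [Set.mem_iUnion, Set.mem_range, Set.mem_Iio, Set.mem_Icc,
        exists_prop] at h3
      obtain ⟨s, hs, a, ⟨ha1, ha2⟩, i, rfl⟩ := h3
      have hq0' : (0:ℤ) < (q:ℤ) := by linarith
      have hdm2 : (q:ℤ) * ((a + (r:ℕ)) / q) + (a + (r:ℕ)) % q = a + (r:ℕ) :=
        Int.mul_ediv_add_emod _ _
      have hm20 : 0 ≤ (a + (r:ℕ)) % (q:ℤ) := Int.emod_nonneg _ (by linarith)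
      have hm2q : (a + (r:ℕ)) % (q:ℤ) < (q:ℤ) := Int.emod_lt_of_pos _ hq0'
      set a' : ℤ := (a + (r:ℕ)) / (q:ℤ) with ha'
      set rn : ℕ := ((a + (r:ℕ)) % (q:ℤ)).toNat with hrn
      have hrnq : rn < q := by omega
      have hrnZ : ((rn:ℕ):ℤ) = (a + (r:ℕ)) % (q:ℤ) := Int.toNat_of_nonneg hm20
      have h1 : (q:ℤ) * a' + ((⟨rn, hrnq⟩ : Fin q) : ℕ) = a + (r:ℕ) := by
        show (q:ℤ) * a' + (rn:ℤ) = a + (r:ℕ)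
        rw [hrnZ]
        exact hdm2
      have hsh : shiftT q (r:ℕ) (wseq (vg s) i a)
          = ∑ j, Ag s ⟨rn, hrnq⟩ i j • wseq (vg s) j a' :=
        wseq_shift (vg s) (Ag s) (hgA s hs) i a a' (r:ℕ) ⟨rn, hrnq⟩ h1
      rw [hsh]
      have hAlo0 : Alo ≤ 0 := by rw [hAlo]; linarith
      have hAhi0 : 0 ≤ Ahi := by rw [hAhi]; linarith
      have hrnb : (rn:ℤ) ≤ (q:ℤ) - 1 := by omega
      have hrnb0 : (0:ℤ) ≤ (rn:ℤ) := Int.natCast_nonneg _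
      have hbound1 : Alo ≤ a' := by
        by_contra hcon
        push_neg at hcon
        have e0 : a' ≤ Alo - 1 := by omega
        have e1 : (q:ℤ) * a' ≤ (q:ℤ) * (Alo - 1) := by nlinarith
        have e2 : (q:ℤ) * Alo ≤ Alo := by nlinarith
        linarith [h1]
      have hbound2 : a' ≤ Ahi := by
        by_contra hcon
        push_neg at hcon
        have e0 : Ahi + 1 ≤ a' := by omega
        have e1 : (q:ℤ) * (Ahi + 1) ≤ (q:ℤ) * a' := by nlinarith
        have e2 : Ahi ≤ (q:ℤ) * Ahi := by nlinarith
        linarith [h1]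
      exact Submodule.sum_mem _ fun j _ =>
        Submodule.smul_mem _ _ (hwS s hs a' hbound1 hbound2 j)
  exact isQRegular_of_submodule q x V hfd hxV hcl
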